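/- arXiv:1604.02881 — 2 statements merged into one kernel-verified Lean document; each statement's English description precedes it below -/
import Mathlib

section
/- Let X be a set, let (Y_α, ν_α), α ∈ J, be an indexed family of GTS's, and let φ_α : X → Y_α (α ∈ J) be maps. Define μ := {⋃_{α∈J} φ_α⁻¹(M_α) | M_α ∈ ν_α for all α ∈ J}. Then: (i) μ is a generalized topology on X; (ii) each φ_α is (μ, ν_α)-continuous; (iii) for every GTS (Z, ρ) and every map h : Z → X, if φ_α ∘ h is (ρ, ν_α)-continuous for every α ∈ J, then h is (ρ, μ)-continuous. -/
universe u v w z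

/-- A generalized topology on `X`: contains `∅` and is closed under arbitrary unions. -/
def IsGT {X : Type u} (μ : Set (Set X)) : Prop :=
  ∅ ∈ μ ∧ ∀ S : Set (Set X), S ⊆ μ → ⋃₀ S ∈ μ

/-- `f` is `(μ, ν)`-continuous: preimages of `ν`-open sets are `μ`-open. -/
def GCont {X : Type u} {Y : Type v} (μ : Set (Set X)) (ν : Set (Set Y)) (f : X → Y) : Prop :=
  ∀ N ∈ ν, f ⁻¹' N ∈ μ

theorem stmt0 {X : Type u} {J : Type v} {Y : J → Type w}
    (ν : ∀ α, Set (Set (Y α))) (hν : ∀ α, IsGT (ν α))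
    (φ : ∀ α, X → Y α) (μ : Set (Set X))
    (hμ : μ = {U : Set X | ∃ M : ∀ α, Set (Y α),
      (∀ α, M α ∈ ν α) ∧ U = ⋃ α, φ α ⁻¹' M α}) :
    IsGT μ ∧ (∀ α, GCont μ (ν α) (φ α)) ∧
      ∀ (Z : Type z) (ρ : Set (Set Z)), IsGT ρ → ∀ h : Z → X,
        (∀ α, GCont ρ (ν α) (φ α ∘ h)) → GCont ρ μ h := by
  classical
  subst hμ
  refine ⟨⟨⟨fun _ => ∅, fun α => (hν α).1, by simp⟩, ?_⟩, ?_, ?_⟩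
  · -- closure under unions
    intro S hS
    -- choose for each U ∈ S a witness family
    choose M hM hMU using fun (U : S) => hS U.2
    refine ⟨fun α => ⋃ U : S, M U α, fun α => ?_, ?_⟩
    · have := (hν α).2 (Set.range fun U : S => M U α)
        (by rintro _ ⟨U, rfl⟩; exact hM U α)
      simpa [Set.sUnion_range] using this
    · ext x
      simp only [Set.mem_sUnion, Set.mem_iUnion, Set.mem_preimage]
      constructor
      · rintro ⟨U, hU, hx⟩
        have hx' : x ∈ ⋃ α, φ α ⁻¹' M ⟨U, hU⟩ α := by
          rw [← hMU ⟨U, hU⟩]; exact hx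
        simp only [Set.mem_iUnion, Set.mem_preimage] at hx'
        obtain ⟨α, hα⟩ := hx'
        exact ⟨α, ⟨U, hU⟩, hα⟩
      · rintro ⟨α, U, hx⟩
        refine ⟨U, U.2, ?_⟩
        rw [hMU U]
        exact Set.mem_iUnion.2 ⟨α, hx⟩
  · intro α N hN
    refine ⟨fun β => if hβ : β = α then hβ ▸ N else ∅, fun β => ?_, ?_⟩
    · by_cases hβ : β = α
      · subst hβ; simp [hN]
      · simp [hβ, (hν β).1]
    · ext x
      simp only [Set.mem_iUnion, Set.mem_preimage]
      constructor
      · intro hx; exact ⟨α, by simpa using hx⟩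
      · rintro ⟨β, hβ⟩
        by_cases h : β = α
        · subst h; simpa using hβ
        · simp [h] at hβ
  · rintro Z ρ hρ h hc U ⟨M, hM, rfl⟩
    have : h ⁻¹' (⋃ α, φ α ⁻¹' M α) = ⋃₀ Set.range fun α => (φ α ∘ h) ⁻¹' M α := by
      ext z; simp [Set.mem_sUnion]
    rw [this]
    exact hρ.2 _ (by rintro _ ⟨α, rfl⟩; exact hc α (M α) (hM α))
end

section
/- (1) Let X_α, α ∈ J, be pairwise disjoint sets with union X = ⋃_{α∈J} X_α, and let γ_α : P(X_α) → P(X_α) be monotone maps. Define γ : P(X) → P(X) by γ(A) := ⋃_{α∈J} γ_α(A ∩ X_α). Then γ is monotone and μ(γ) = {A ⊆ X | A ∩ X_α ∈ μ(γ_α) for all α ∈ J}; in other words, (X, μ(γ)) is the sum of the GTS's (X_α, μ(γ_α)). (2) Let X be a set, γ : P(X) → P(X) a monotone map, X₀ ⊆ X, and define δ : P(X₀) → P(X₀) by δ(A₀) := γ(A₀) ∩ X₀. Then μ(δ) ⊆ μ(γ)|X₀, where μ(γ)|X₀ = {M ∩ X₀ | M ∈ μ(γ)}; moreover the converse inclusion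 fails in general, even when γ is completely additive and takes only the values ∅ and X. -/
universe u v w

/-- For a monotone `γ : P(X) → P(X)`, the generalized topology `μ(γ)` of
`γ`-open sets, i.e. the sets `A` with `A ⊆ γ(A)`. -/
def muGamma {X : Type*} (γ : Set X → Set X) : Set (Set X) :=
  {A : Set X | A ⊆ γ A}

/-!
A set `A` of the sum is `γ`-open iff each slice `A ∩ X_α` lies in `γ(A) ∩ X_α`, and the slice
of `γ(A)` over `α` is exactly `γ_α(A ∩ X_α)`, because the summands are disjoint.

For the subspace `X₀` (more generally, any injective `f : Y → X`), a `δ`-open `A` gives the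
`γ`-open set `M = f(A) ∪ (γ(f(A)) \ f(Y))`: it lies in `γ(f(A)) ⊆ γ(M)`, and its trace is `A`.
Conversely, for `γ(A) = {x | p ∈ A}` with `p ∉ X₀ ≠ ∅`, the whole space is `γ`-open, but its
trace `X₀` has `δ(X₀) = ∅`.
-/

open Set

section Sum

variable {J : Type*} {Xa : J → Type*}

def sigmaGamma (γa : ∀ α, Set (Xa α) → Set (Xa α)) (A : Set (Σ α, Xa α)) :
    Set (Σ α, Xa α) :=
  ⋃ α, Sigma.mk α '' γa α (Sigma.mk α ⁻¹' A)

theorem monotone_sigmaGamma {γa : ∀ α, Set (Xa α) → Set (Xa α)} (hγa : ∀ α, Monotone (γa α)) :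
    Monotone (sigmaGamma γa) := fun _ _ hAB =>
  iUnion_mono fun α => image_mono (hγa α (preimage_mono hAB))

theorem preimage_sigmaMk_sigmaGamma (γa : ∀ α, Set (Xa α) → Set (Xa α))
    (A : Set (Σ α, Xa α)) (α : J) :
    Sigma.mk α ⁻¹' sigmaGamma γa A = γa α (Sigma.mk α ⁻¹' A) := by
  rw [sigmaGamma, ← biUnion_univ, ← sigma_eq_biUnion, mk_preimage_sigma (mem_univ α)]

theorem muGamma_sigmaGamma (γa : ∀ α, Set (Xa α) → Set (Xa α)) :
    muGamma (sigmaGamma γa) = {A | ∀ α, Sigma.mk α ⁻¹' A ∈ muGamma (γa α)} := by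
  ext A
  simp only [muGamma, mem_ofPred_eq, ← preimage_sigmaMk_sigmaGamma]
  exact ⟨fun h α => preimage_mono h, fun h ⟨α, a⟩ ha => h α ha⟩

end Sum

section Pullback

variable {X Y : Type*}

def pullbackGamma (f : Y → X) (γ : Set X → Set X) (A : Set Y) : Set Y :=
  f ⁻¹' γ (f '' A)

theorem muGamma_pullbackGamma_subset {f : Y → X} (hf : Function.Injective f)
    {γ : Set X → Set X} (hγ : Monotone γ) :
    muGamma (pullbackGamma f γ) ⊆ preimage f '' muGamma γ := by
  intro A hA
  have himage : f '' A ⊆ γ (f '' A) := image_subset_iff.mpr hA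
  set M := f '' A ∪ (γ (f '' A) \ range f)
  have hM : M ⊆ γ (f '' A) := union_subset himage sdiff_subset
  refine ⟨M, hM.trans (hγ subset_union_left), ?_⟩
  rw [preimage_union, hf.preimage_image, preimage_sdiff, preimage_range, sdiff_univ,
    union_empty]

end Pullback

section Counterexample

variable {X Y : Type*}

def pointGamma (p : X) (A : Set X) : Set X :=
  {_x | p ∈ A}

theorem monotone_pointGamma (p : X) : Monotone (pointGamma p) :=
  fun _ _ hAB _ hp => hAB hp

theorem pointGamma_sUnion (p : X) (S : Set (Set X)) :
    pointGamma p (⋃₀ S) = ⋃ A ∈ S, pointGamma p A := by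
  ext
  simp [pointGamma]

theorem pointGamma_eq_empty_or_univ (p : X) (A : Set X) :
    pointGamma p A = ∅ ∨ pointGamma p A = univ := by
  by_cases hp : p ∈ A
  · exact Or.inr (eq_univ_of_forall fun _ => hp)
  · exact Or.inl (eq_empty_of_forall_notMem fun _ => hp)

theorem not_image_preimage_muGamma_pointGamma_subset [Nonempty Y] {f : Y → X} {p : X}
    (hp : p ∉ range f) :
    ¬ preimage f '' muGamma (pointGamma p) ⊆ muGamma (pullbackGamma f (pointGamma p)) := by
  intro h
  have huniv : (univ : Set Y) ∈ muGamma (pullbackGamma f (pointGamma p)) :=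
    h ⟨univ, fun _ _ => mem_univ p, preimage_univ⟩
  obtain ⟨y⟩ := ‹Nonempty Y›
  obtain ⟨y', -, hy'⟩ := huniv (mem_univ y)
  exact hp ⟨y', hy'⟩

end Counterexample

theorem stmt19 :
    -- (1) sums: on the disjoint union `Σ α, Xa α`, the map
    -- `γ(A) = ⋃ α γ_α (A ∩ X_α)` is monotone and `μ(γ)` is the sum of the
    -- GTS's `(X_α, μ(γ_α))`.
    (∀ (J : Type v) (Xa : J → Type w) (γa : ∀ α, Set (Xa α) → Set (Xa α)),
      (∀ α, Monotone (γa α)) →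
      ∀ γ : Set (Σ α, Xa α) → Set (Σ α, Xa α),
        (∀ A, γ A = ⋃ α, Sigma.mk α '' γa α (Sigma.mk α ⁻¹' A)) →
        (Monotone γ ∧
          muGamma γ = {A : Set (Σ α, Xa α) | ∀ α, Sigma.mk α ⁻¹' A ∈ muGamma (γa α)})) ∧
    -- (2) subspaces: `μ(δ) ⊆ μ(γ)|X₀` for `δ(A₀) = γ(A₀) ∩ X₀` ...
    (∀ (X : Type u) (γ : Set X → Set X), Monotone γ → ∀ X₀ : Set X,
      ∀ δ : Set ↥X₀ → Set ↥X₀,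
        (∀ A₀ : Set ↥X₀, δ A₀ = ((↑) : ↥X₀ → X) ⁻¹' γ (((↑) : ↥X₀ → X) '' A₀)) →
        muGamma δ ⊆ {A : Set ↥X₀ | ∃ M ∈ muGamma γ, A = ((↑) : ↥X₀ → X) ⁻¹' M}) ∧
    -- ... but the converse inclusion fails in general, even for a completely
    -- additive `γ` taking only the values `∅` and `X`.
    (∃ (X : Type) (γ : Set X → Set X) (X₀ : Set X),
      Monotone γ ∧
      (∀ S : Set (Set X), γ (⋃₀ S) = ⋃ A ∈ S, γ A) ∧
      (∀ A : Set X, γ A = ∅ ∨ γ A = Set.univ) ∧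
      ¬ ({A : Set ↥X₀ | ∃ M ∈ muGamma γ, A = ((↑) : ↥X₀ → X) ⁻¹' M} ⊆
          muGamma (fun A₀ : Set ↥X₀ =>
            ((↑) : ↥X₀ → X) ⁻¹' γ (((↑) : ↥X₀ → X) '' A₀)))) := by
  refine ⟨?sum, ?subspace, ?counterexample⟩
  · intro J Xa γa hγa γ hγ
    obtain rfl : γ = sigmaGamma γa := funext hγ
    exact ⟨monotone_sigmaGamma hγa, muGamma_sigmaGamma γa⟩
  · intro X γ hγ X₀ δ hδ A hA
    obtain rfl : δ = pullbackGamma Subtype.val γ := funext hδ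
    obtain ⟨M, hM, rfl⟩ := muGamma_pullbackGamma_subset Subtype.val_injective hγ hA
    exact ⟨M, hM, rfl⟩
  · refine ⟨Bool, pointGamma true, {false}, monotone_pointGamma true, pointGamma_sUnion true,
      pointGamma_eq_empty_or_univ true, fun h => ?_⟩
    have : Nonempty ({false} : Set Bool) := ⟨⟨false, rfl⟩⟩
    refine not_image_preimage_muGamma_pointGamma_subset (f := Subtype.val) ?_
      fun A ⟨M, hM, hMA⟩ => h ⟨M, hM, hMA.symm⟩
    simp
end
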